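/- Fix an integer d ≥ 1, T > 0, and functions b, σ : {1,…,d} × ℝ → ℝ satisfying |b(i,x)−b(i,y)| + |σ(i,x)−σ(i,y)| ≤ K|x−y| for some K > 0 and all i, x, y. Fix φ ∈ ℍ_T and a step function λ : [0,T] → ℝ of the form λ(t) = λ₀·1_{{0}}(t) + Σ_{j=0}^k λ_j·1_{(t_j, t_{j+1}]}(t) for a partition 0 = t₀ < t₁ < … < t_{k+1} = T and real numbers λ₀,…,λ_k. Then the map ν ↦ ∫₀ᵀ λ(s) φ'(s) ds − ∫₀ᵀ λ(s) b̂(ν, φ(s))(s) ds − ∫₀ᵀ (λ(s)²/2) σ̂²(ν, φ(s))(s) ds is continuous from (𝕄_T, d_T) to ℝ. -/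

import Mathlib

/-!
Because `λ` is a step function, `F_λ(μ) - F_λ(ν) = ∑ᵢ ∫₀ᵀ gᵢ (K_ν(·,i) - K_μ(·,i))` where
`gᵢ = λ b(i,φ) + λ²/2 σ(i,φ)²` is continuous on each closed step interval (φ is continuous and
`b`, `σ` are Lipschitz). For a continuous `h` and a bounded `Δ` whose primitive is uniformly at
most `δ`, freeze `h` at the right endpoints of a partition finer than its modulus of uniform
continuity: the freezing error is small, and each frozen piece is `h(p)` times an increment of
the primitive, hence at most `2δ sup |h|`. Since `d_T(μ,ν)` bounds the primitive of `K_μ - K_ν`,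
this gives continuity.
-/

open MeasureTheory

/-- A kernel on `[0,T] × {1,…,d}`. -/
def IsMKernel (d : ℕ) (T : ℝ) (K : ℝ → Fin d → ℝ) : Prop :=
  (∀ i : Fin d, Measurable fun s => K s i) ∧
    ∀ s ∈ Set.Icc (0:ℝ) T, (∀ i : Fin d, 0 ≤ K s i) ∧ ∑ i : Fin d, K s i = 1

/-- `lam` is a step function on `[0,T]` of the form
`λ(t) = λ₀ 1_{{0}}(t) + ∑_{j=0}^k λ_j 1_{(t_j,t_{j+1}]}(t)` for some partition
`0 = t₀ < t₁ < … < t_{k+1} = T`. -/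
def IsStepFun (T : ℝ) (lam : ℝ → ℝ) : Prop :=
  ∃ k : ℕ, ∃ t : Fin (k + 2) → ℝ, ∃ c : Fin (k + 1) → ℝ,
    StrictMono t ∧ t 0 = 0 ∧ t (Fin.last (k + 1)) = T ∧ lam 0 = c 0 ∧
    ∀ j : Fin (k + 1), ∀ s : ℝ, t j.castSucc < s → s ≤ t j.succ → lam s = c j

/-- The functional
`F_λ(ν) = ∫₀ᵀ λ φ' − ∫₀ᵀ λ b̂(ν,φ) − ∫₀ᵀ (λ²/2) σ̂²(ν,φ)`, expressed through the
kernel `K` of `ν`. -/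
noncomputable def Flam (d : ℕ) (T : ℝ) (b σ : Fin d → ℝ → ℝ) (φ φd : ℝ → ℝ)
    (lam : ℝ → ℝ) (K : ℝ → Fin d → ℝ) : ℝ :=
  (∫ s in (0:ℝ)..T, lam s * φd s)
    - (∫ s in (0:ℝ)..T, lam s * ∑ i : Fin d, b i (φ s) * K s i)
    - ∫ s in (0:ℝ)..T, (lam s) ^ 2 / 2 * ∑ i : Fin d, (σ i (φ s)) ^ 2 * K s i

open Set Filter Topology

theorem IntervalIntegrable.trans_iterate_fin {E : Type*} [NormedAddCommGroup E] {μ : Measure ℝ}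
    {f : ℝ → E} {n : ℕ} {t : Fin (n + 1) → ℝ}
    (hf : ∀ j : Fin n, IntervalIntegrable f μ (t j.castSucc) (t j.succ)) :
    IntervalIntegrable f μ (t 0) (t (Fin.last n)) := by
  induction n with
  | zero => exact IntervalIntegrable.refl
  | succ n ih =>
    have hprefix := ih (t := fun j => t j.castSucc) fun j => by simpa using hf j.castSucc
    simpa using hprefix.trans (hf (Fin.last n))

theorem intervalIntegral.sum_integral_adjacent_intervals_fin {E : Type*} [NormedAddCommGroup E]
    [NormedSpace ℝ E] {μ : Measure ℝ} {f : ℝ → E} {n : ℕ} {t : Fin (n + 1) → ℝ}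
    (hf : ∀ j : Fin n, IntervalIntegrable f μ (t j.castSucc) (t j.succ)) :
    ∑ j : Fin n, ∫ x in t j.castSucc..t j.succ, f x ∂μ = ∫ x in t 0..t (Fin.last n), f x ∂μ := by
  induction n with
  | zero => simp
  | succ n ih =>
    have hprefix := ih (t := fun j => t j.castSucc) fun j => by simpa using hf j.castSucc
    have hint := IntervalIntegrable.trans_iterate_fin (t := fun j => t j.castSucc)
      fun j => by simpa using hf j.castSucc
    simp only [Fin.castSucc_zero] at hprefix hint
    rw [Fin.sum_univ_castSucc]
    simp only [Fin.succ_castSucc] at hprefix ⊢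
    rw [hprefix, intervalIntegral.integral_add_adjacent_intervals hint (hf (Fin.last n))]
    simp

theorem abs_integral_mul_le_of_abs_sub_le {u v ε₁ B : ℝ} {h Δ : ℝ → ℝ} (huv : u ≤ v)
    (hhΔ : IntervalIntegrable (fun x => h x * Δ x) volume u v)
    (hΔ : IntervalIntegrable Δ volume u v)
    (hh : ∀ x ∈ Icc u v, |h x - h v| ≤ ε₁) (hΔB : ∀ x ∈ Icc u v, |Δ x| ≤ B) :
    |∫ x in u..v, h x * Δ x| ≤ ε₁ * B * (v - u) + |h v| * |∫ x in u..v, Δ x| := by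
  have hsplit : ∫ x in u..v, h x * Δ x
      = (∫ x in u..v, (h x - h v) * Δ x) + h v * ∫ x in u..v, Δ x := by
    simp_rw [sub_mul]
    rw [intervalIntegral.integral_sub hhΔ (hΔ.const_mul _), intervalIntegral.integral_const_mul]
    ring
  have hfrozen : |∫ x in u..v, (h x - h v) * Δ x| ≤ ε₁ * B * (v - u) := by
    have hε₁ : 0 ≤ ε₁ := (abs_nonneg _).trans (hh v (right_mem_Icc.2 huv))
    have := intervalIntegral.norm_integral_le_of_norm_le_const (C := ε₁ * B)
      (f := fun x => (h x - h v) * Δ x) fun x hx => by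
        rw [uIoc_of_le huv] at hx
        rw [Real.norm_eq_abs, abs_mul]
        exact mul_le_mul (hh x (Ioc_subset_Icc_self hx)) (hΔB x (Ioc_subset_Icc_self hx))
          (abs_nonneg _) hε₁
    rwa [Real.norm_eq_abs, abs_of_nonneg (sub_nonneg.2 huv)] at this
  rw [hsplit]
  calc _ ≤ |∫ x in u..v, (h x - h v) * Δ x| + |h v * ∫ x in u..v, Δ x| := abs_add_le _ _
    _ ≤ _ := by rw [abs_mul]; linarith

theorem exists_partition_le {a c η : ℝ} (hac : a ≤ c) (hη : 0 < η) :
    ∃ n : ℕ, ∃ p : ℕ → ℝ, Monotone p ∧ p 0 = a ∧ p n = c ∧ ∀ m, p (m + 1) - p m ≤ η := by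
  set n : ℕ := ⌈(c - a) / η⌉₊ + 1
  have hn : (0 : ℝ) < n := by positivity
  have hstep : 0 ≤ (c - a) / n := div_nonneg (sub_nonneg.2 hac) hn.le
  refine ⟨n, fun m => a + m * ((c - a) / n), fun i j hij => ?_, by simp, ?_, fun m => ?_⟩
  · have : (i : ℝ) ≤ j := by exact_mod_cast hij
    simp only
    nlinarith
  · simp only
    field_simp
    ring
  · have hceil : (c - a) / η ≤ n := (Nat.le_ceil _).trans (by simp [n])
    push_cast
    rw [add_mul, one_mul, add_sub_add_left_eq_sub, add_sub_cancel_left, div_le_iff₀ hn]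
    rwa [div_le_iff₀ hη, mul_comm] at hceil

theorem abs_integral_mul_le_of_partition {o a c ε₁ B M δ : ℝ} {h Δ : ℝ → ℝ} {n : ℕ}
    {p : ℕ → ℝ} (hoa : o ≤ a) (hp : Monotone p) (hp0 : p 0 = a) (hpn : p n = c)
    (hh : ContinuousOn h (Icc a c))
    (hhp : ∀ m < n, ∀ x ∈ Icc (p m) (p (m + 1)), |h x - h (p (m + 1))| ≤ ε₁)
    (hM : ∀ x ∈ Icc a c, |h x| ≤ M) (hΔ : IntegrableOn Δ (Icc o c))
    (hΔB : ∀ x ∈ Icc a c, |Δ x| ≤ B) (hΔδ : ∀ x ∈ Icc a c, |∫ y in o..x, Δ y| ≤ δ) :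
    |∫ x in a..c, h x * Δ x| ≤ ε₁ * B * (c - a) + n * (M * (2 * δ)) := by
  have hpmem : ∀ m ≤ n, p m ∈ Icc a c := fun m hm => ⟨hp0 ▸ hp m.zero_le, hpn ▸ hp hm⟩
  have hac : a ≤ c := hp0 ▸ hpn ▸ hp n.zero_le
  have hac' : Icc a c ⊆ Icc o c := Icc_subset_Icc_left hoa
  have ho : o ∈ Icc o c := left_mem_Icc.2 (hoa.trans hac)
  have hΔint : ∀ x ∈ Icc o c, ∀ y ∈ Icc o c, IntervalIntegrable Δ volume x y :=
    fun x hx y hy => (hΔ.mono_set (uIcc_subset_Icc hx hy)).intervalIntegrable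
  have hhΔ : IntegrableOn (fun x => h x * Δ x) (Icc a c) :=
    (hΔ.mono_set hac').continuousOn_mul hh isCompact_Icc
  have hpiece : ∀ m < n, |∫ x in p m..p (m + 1), h x * Δ x|
      ≤ ε₁ * B * (p (m + 1) - p m) + M * (2 * δ) := by
    intro m hm
    have hu := hpmem m hm.le
    have hv := hpmem (m + 1) hm
    have hincr : |∫ x in p m..p (m + 1), Δ x| ≤ 2 * δ := by
      rw [← intervalIntegral.integral_interval_sub_left (hΔint o ho _ (hac' hv))
        (hΔint o ho _ (hac' hu))]
      linarith [abs_sub (∫ y in o..p (m + 1), Δ y) (∫ y in o..p m, Δ y), hΔδ _ hu, hΔδ _ hv]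
    refine (abs_integral_mul_le_of_abs_sub_le (hp m.le_succ)
      (hhΔ.mono_set (uIcc_subset_Icc hu hv)).intervalIntegrable (hΔint _ (hac' hu) _ (hac' hv))
      (hhp m hm) fun x hx => hΔB x (Icc_subset_Icc hu.1 hv.2 hx)).trans ?_
    exact add_le_add_right (mul_le_mul (hM _ hv) hincr (abs_nonneg _)
      ((abs_nonneg _).trans (hM _ hv))) _
  have hsum := intervalIntegral.sum_integral_adjacent_intervals (μ := volume) (a := p) (n := n)
    (f := fun x => h x * Δ x) fun m hm =>
      (hhΔ.mono_set (uIcc_subset_Icc (hpmem m hm.le) (hpmem (m + 1) hm))).intervalIntegrable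
  rw [hp0, hpn] at hsum
  rw [← hsum]
  calc _ ≤ ∑ m ∈ Finset.range n, |∫ x in p m..p (m + 1), h x * Δ x| :=
        Finset.abs_sum_le_sum_abs _ _
    _ ≤ ∑ m ∈ Finset.range n, (ε₁ * B * (p (m + 1) - p m) + M * (2 * δ)) :=
        Finset.sum_le_sum fun m hm => hpiece m (Finset.mem_range.1 hm)
    _ = ε₁ * B * (c - a) + n * (M * (2 * δ)) := by
        rw [Finset.sum_add_distrib, ← Finset.mul_sum, Finset.sum_range_sub, hp0, hpn,
          Finset.sum_const, Finset.card_range, nsmul_eq_mul]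

theorem ContinuousOn.eventually_abs_integral_mul_le {o a c B ε : ℝ} {h : ℝ → ℝ}
    (hh : ContinuousOn h (Icc a c)) (hoa : o ≤ a) (hac : a ≤ c) (hε : 0 < ε) :
    ∀ᶠ δ in 𝓝[>] 0, ∀ Δ : ℝ → ℝ, IntegrableOn Δ (Icc o c) → (∀ x ∈ Icc a c, |Δ x| ≤ B) →
      (∀ x ∈ Icc a c, |∫ y in o..x, Δ y| ≤ δ) → |∫ x in a..c, h x * Δ x| ≤ ε := by
  obtain ⟨M, hM⟩ := isCompact_Icc.exists_bound_of_continuousOn hh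
  have hM0 : 0 ≤ M := (norm_nonneg _).trans (hM a (left_mem_Icc.2 hac))
  have hden : 0 < |B| * (c - a) + 1 := by have := sub_nonneg.2 hac; positivity
  set ε₁ := ε / (2 * (|B| * (c - a) + 1))
  have hε₁ : 0 < ε₁ := by positivity
  obtain ⟨η, hη, hhη⟩ := Metric.uniformContinuousOn_iff_le.1
    (isCompact_Icc.uniformContinuousOn_of_continuous hh) ε₁ hε₁
  obtain ⟨n, p, hp, hp0, hpn, hpη⟩ := exists_partition_le hac hη
  have hδ₀ : 0 < ε / (4 * (n * M + 1)) := by positivity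
  filter_upwards [Ioo_mem_nhdsGT hδ₀] with δ hδ Δ hΔ hΔB hΔδ
  have hpmem : ∀ m ≤ n, p m ∈ Icc a c := fun m hm => ⟨hp0 ▸ hp m.zero_le, hpn ▸ hp hm⟩
  have hhp : ∀ m < n, ∀ x ∈ Icc (p m) (p (m + 1)), |h x - h (p (m + 1))| ≤ ε₁ := by
    intro m hm x hx
    have hx' : x ∈ Icc a c := Icc_subset_Icc (hpmem m hm.le).1 (hpmem (m + 1) hm).2 hx
    refine hhη x hx' _ (hpmem (m + 1) hm) ?_
    rw [Real.dist_eq, abs_sub_comm, abs_of_nonneg (sub_nonneg.2 hx.2)]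
    linarith [hpη m, hx.1]
  refine (abs_integral_mul_le_of_partition hoa hp hp0 hpn hh hhp
    (fun x hx => by simpa using hM x hx) hΔ hΔB hΔδ).trans ?_
  have hB : 0 ≤ B := (abs_nonneg _).trans (hΔB a (left_mem_Icc.2 hac))
  have hfreezing : ε₁ * B * (c - a) ≤ ε / 2 := by
    have : ε₁ * (|B| * (c - a) + 1) = ε / 2 := by simp only [ε₁]; field_simp
    rw [abs_of_nonneg hB] at this
    nlinarith [sub_nonneg.2 hac]
  have hincrements : n * (M * (2 * δ)) ≤ ε / 2 := by
    have hδ' : δ * (4 * (n * M + 1)) < ε := (lt_div_iff₀ (by positivity)).1 hδ.2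
    nlinarith [hδ.1]
  linarith

def PiecewiseContinuousOn {n : ℕ} (t : Fin (n + 1) → ℝ) (g : ℝ → ℝ) : Prop :=
  ∀ j : Fin n, ∃ h : ℝ → ℝ,
    ContinuousOn h (Icc (t j.castSucc) (t j.succ)) ∧ EqOn g h (Ioc (t j.castSucc) (t j.succ))

namespace PiecewiseContinuousOn

variable {n : ℕ} {t : Fin (n + 1) → ℝ} {g : ℝ → ℝ}

theorem of_eq_on_pieces (ht : Monotone t) {lam : ℝ → ℝ} {c : Fin n → ℝ}
    (hlam : ∀ j : Fin n, ∀ s, t j.castSucc < s → s ≤ t j.succ → lam s = c j)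
    {F : ℝ → ℝ → ℝ} (hF : ∀ r, ContinuousOn (F r) (Icc (t 0) (t (Fin.last n)))) :
    PiecewiseContinuousOn t fun s => F (lam s) s := fun j =>
  ⟨F (c j), (hF _).mono (Icc_subset_Icc (ht (Fin.zero_le _)) (ht (Fin.le_last _))),
    fun s hs => by simp only [hlam j s hs.1 hs.2]⟩

theorem intervalIntegrable_mul_piece (ht : Monotone t) (hg : PiecewiseContinuousOn t g)
    {Δ : ℝ → ℝ} (hΔ : IntegrableOn Δ (Icc (t 0) (t (Fin.last n)))) (j : Fin n) :
    IntervalIntegrable (fun s => g s * Δ s) volume (t j.castSucc) (t j.succ) := by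
  obtain ⟨h, hc, hgh⟩ := hg j
  have hle := ht (Fin.castSucc_le_succ j)
  have hsub : Icc (t j.castSucc) (t j.succ) ⊆ Icc (t 0) (t (Fin.last n)) :=
    Icc_subset_Icc (ht (Fin.zero_le _)) (ht (Fin.le_last _))
  refine (((hΔ.mono_set hsub).continuousOn_mul hc isCompact_Icc).mono_set
    (uIcc_of_le hle).subset).intervalIntegrable.congr fun s hs => ?_
  rw [uIoc_of_le hle] at hs
  simp only [hgh hs]

theorem intervalIntegrable_mul (ht : Monotone t) (hg : PiecewiseContinuousOn t g)
    {Δ : ℝ → ℝ} (hΔ : IntegrableOn Δ (Icc (t 0) (t (Fin.last n)))) :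
    IntervalIntegrable (fun s => g s * Δ s) volume (t 0) (t (Fin.last n)) :=
  IntervalIntegrable.trans_iterate_fin (hg.intervalIntegrable_mul_piece ht hΔ)

theorem eventually_abs_integral_mul_le (ht : Monotone t) (hg : PiecewiseContinuousOn t g)
    {B ε : ℝ} (hε : 0 < ε) :
    ∀ᶠ δ in 𝓝[>] 0, ∀ Δ : ℝ → ℝ, IntegrableOn Δ (Icc (t 0) (t (Fin.last n))) →
      (∀ x ∈ Icc (t 0) (t (Fin.last n)), |Δ x| ≤ B) →
      (∀ x ∈ Icc (t 0) (t (Fin.last n)), |∫ y in t 0..x, Δ y| ≤ δ) →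
      |∫ x in t 0..t (Fin.last n), g x * Δ x| ≤ ε := by
  have hsub : ∀ j : Fin n, Icc (t j.castSucc) (t j.succ) ⊆ Icc (t 0) (t (Fin.last n)) :=
    fun j => Icc_subset_Icc (ht (Fin.zero_le _)) (ht (Fin.le_last _))
  choose h hc hgh using hg
  have hε' : 0 < ε / (n + 1) := by positivity
  filter_upwards [eventually_all.2 fun j => (hc j).eventually_abs_integral_mul_le (B := B)
    (ht (Fin.zero_le j.castSucc)) (ht (Fin.castSucc_le_succ j)) hε']
    with δ hδ Δ hΔ hΔB hΔδ
  rw [← intervalIntegral.sum_integral_adjacent_intervals_fin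
    (intervalIntegrable_mul_piece ht (fun j => ⟨h j, hc j, hgh j⟩) hΔ)]
  calc _ ≤ ∑ j : Fin n, |∫ x in t j.castSucc..t j.succ, g x * Δ x| :=
        Finset.abs_sum_le_sum_abs _ _
    _ ≤ ∑ _j : Fin n, ε / (n + 1) := Finset.sum_le_sum fun j _ => by
        rw [intervalIntegral.integral_congr_ae (g := fun x => h j x * Δ x) (ae_of_all _
          fun x hx => by rw [uIoc_of_le (ht (Fin.castSucc_le_succ j))] at hx; rw [hgh j hx])]
        exact hδ j Δ (hΔ.mono_set (Icc_subset_Icc_right (hsub j (right_mem_Icc.2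
          (ht (Fin.castSucc_le_succ j)))).2)) (fun x hx => hΔB x (hsub j hx))
          fun x hx => hΔδ x (hsub j hx)
    _ ≤ ε := by
        rw [Finset.sum_const, Finset.card_univ, Fintype.card_fin, nsmul_eq_mul,
          mul_div_assoc', div_le_iff₀ (by positivity)]
        nlinarith

end PiecewiseContinuousOn

namespace IsStepFun

variable {T : ℝ} {lam : ℝ → ℝ} {F : ℝ → ℝ → ℝ}

theorem intervalIntegrable_mul (hlam : IsStepFun T lam)
    (hF : ∀ r, ContinuousOn (F r) (Icc 0 T)) {Q : ℝ → ℝ} (hQ : IntegrableOn Q (Icc 0 T)) :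
    IntervalIntegrable (fun s => F (lam s) s * Q s) volume 0 T := by
  obtain ⟨k, t, c, ht, ht0, htT, -, hstep⟩ := hlam
  rw [← ht0, ← htT] at hF hQ ⊢
  exact (PiecewiseContinuousOn.of_eq_on_pieces ht.monotone hstep hF).intervalIntegrable_mul
    ht.monotone hQ

theorem eventually_abs_integral_mul_le (hlam : IsStepFun T lam)
    (hF : ∀ r, ContinuousOn (F r) (Icc 0 T)) {B ε : ℝ} (hε : 0 < ε) :
    ∀ᶠ δ in 𝓝[>] 0, ∀ Δ : ℝ → ℝ, IntegrableOn Δ (Icc 0 T) → (∀ x ∈ Icc 0 T, |Δ x| ≤ B) →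
      (∀ x ∈ Icc 0 T, |∫ y in 0..x, Δ y| ≤ δ) → |∫ x in 0..T, F (lam x) x * Δ x| ≤ ε := by
  obtain ⟨k, t, c, ht, ht0, htT, -, hstep⟩ := hlam
  rw [← ht0, ← htT] at hF
  have h := (PiecewiseContinuousOn.of_eq_on_pieces ht.monotone hstep hF
    ).eventually_abs_integral_mul_le (B := B) ht.monotone hε
  rwa [ht0, htT] at h

end IsStepFun

namespace IsMKernel

variable {d : ℕ} {T : ℝ} {K : ℝ → Fin d → ℝ}

theorem mem_Icc (hK : IsMKernel d T K) {s : ℝ} (hs : s ∈ Icc 0 T) (i : Fin d) :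
    K s i ∈ Icc 0 1 :=
  ⟨(hK.2 s hs).1 i, (hK.2 s hs).2 ▸
    Finset.single_le_sum (fun j _ => (hK.2 s hs).1 j) (Finset.mem_univ i)⟩

theorem abs_sub_le_one (hK : IsMKernel d T K) {K' : ℝ → Fin d → ℝ} (hK' : IsMKernel d T K')
    {s : ℝ} (hs : s ∈ Icc 0 T) (i : Fin d) : |K s i - K' s i| ≤ 1 := by
  have h := hK.mem_Icc hs i
  have h' := hK'.mem_Icc hs i
  rw [abs_le]
  constructor <;> linarith [h.1, h.2, h'.1, h'.2]

theorem integrableOn (hK : IsMKernel d T K) (i : Fin d) :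
    IntegrableOn (fun s => K s i) (Icc 0 T) :=
  Measure.integrableOn_of_bounded measure_Icc_lt_top.ne (hK.1 i).aestronglyMeasurable (M := 1)
    ((ae_restrict_iff' measurableSet_Icc).2 (ae_of_all _ fun s hs => by
      rw [Real.norm_eq_abs, abs_of_nonneg (hK.mem_Icc hs i).1]
      exact (hK.mem_Icc hs i).2))

theorem abs_integral_sub_le_dist (hK : IsMKernel d T K) {K' : ℝ → Fin d → ℝ}
    (hK' : IsMKernel d T K') {ν μ : C(Icc (0:ℝ) T, Fin d → ℝ)}
    (hν : ∀ t : Icc (0:ℝ) T, ∀ i : Fin d, ν t i = ∫ s in (0:ℝ)..(t:ℝ), K s i)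
    (hμ : ∀ t : Icc (0:ℝ) T, ∀ i : Fin d, μ t i = ∫ s in (0:ℝ)..(t:ℝ), K' s i)
    {x : ℝ} (hx : x ∈ Icc 0 T) (i : Fin d) :
    |∫ s in (0:ℝ)..x, (K s i - K' s i)| ≤ dist μ ν := by
  have hsub : uIcc 0 x ⊆ Icc 0 T := uIcc_subset_Icc (left_mem_Icc.2 (hx.1.trans hx.2)) hx
  rw [intervalIntegral.integral_sub ((hK.integrableOn i).mono_set hsub).intervalIntegrable
    ((hK'.integrableOn i).mono_set hsub).intervalIntegrable, ← hν ⟨x, hx⟩ i, ← hμ ⟨x, hx⟩ i,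
    ← Real.dist_eq, dist_comm]
  exact (dist_le_pi_dist _ _ i).trans (ContinuousMap.dist_apply_le_dist _)

end IsMKernel

theorem continuousOn_of_eq_integral {φ f : ℝ → ℝ} {a b : ℝ} (hf : IntegrableOn f (Icc a b))
    (hφ : ∀ x ∈ Icc a b, φ x = ∫ s in a..x, f s) : ContinuousOn φ (Icc a b) := by
  rcases le_or_gt a b with hab | hab
  · rw [← uIcc_of_le hab] at hf hφ ⊢
    exact (intervalIntegral.continuousOn_primitive_interval hf).congr hφ
  · simp [Icc_eq_empty hab.not_ge]

section Flam

variable {d : ℕ} {T : ℝ} {b σ : Fin d → ℝ → ℝ} {φ φd lam : ℝ → ℝ}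

theorem Flam_eq_sub_sum {K : ℝ → Fin d → ℝ}
    (hb : ∀ i, IntervalIntegrable (fun s => lam s * b i (φ s) * K s i) volume 0 T)
    (hσ : ∀ i, IntervalIntegrable (fun s => lam s ^ 2 / 2 * σ i (φ s) ^ 2 * K s i) volume 0 T) :
    Flam d T b σ φ φd lam K = (∫ s in (0:ℝ)..T, lam s * φd s) -
      ∑ i, ∫ s in (0:ℝ)..T, (lam s * b i (φ s) + lam s ^ 2 / 2 * σ i (φ s) ^ 2) * K s i := by
  simp_rw [add_mul]
  rw [Flam, Finset.sum_congr rfl fun i _ => intervalIntegral.integral_add (hb i) (hσ i),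
    Finset.sum_add_distrib, ← intervalIntegral.integral_finsetSum fun i _ => hb i,
    ← intervalIntegral.integral_finsetSum fun i _ => hσ i]
  simp_rw [Finset.mul_sum, mul_assoc]
  ring

theorem Flam_sub_Flam {K K' : ℝ → Fin d → ℝ} (hlam : IsStepFun T lam)
    (hbφ : ∀ i, ContinuousOn (fun s => b i (φ s)) (Icc 0 T))
    (hσφ : ∀ i, ContinuousOn (fun s => σ i (φ s)) (Icc 0 T))
    (hK : IsMKernel d T K) (hK' : IsMKernel d T K') :
    Flam d T b σ φ φd lam K' - Flam d T b σ φ φd lam K =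
      ∑ i, ∫ s in (0:ℝ)..T,
        (lam s * b i (φ s) + lam s ^ 2 / 2 * σ i (φ s) ^ 2) * (K s i - K' s i) := by
  have hg : ∀ i, ∀ r, ContinuousOn (fun s => r * b i (φ s) + r ^ 2 / 2 * σ i (φ s) ^ 2)
      (Icc 0 T) := fun i r =>
    (continuousOn_const.mul (hbφ i)).add (continuousOn_const.mul ((hσφ i).pow 2))
  have hint := fun {Q : ℝ → Fin d → ℝ} (hQ : IsMKernel d T Q) =>
    Flam_eq_sub_sum (φd := φd) (K := Q)
      (fun i => hlam.intervalIntegrable_mul (F := fun r s => r * b i (φ s))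
        (fun _ => continuousOn_const.mul (hbφ i)) (hQ.integrableOn i))
      (fun i => hlam.intervalIntegrable_mul (F := fun r s => r ^ 2 / 2 * σ i (φ s) ^ 2)
        (fun _ => continuousOn_const.mul ((hσφ i).pow 2)) (hQ.integrableOn i))
  rw [hint hK, hint hK', sub_sub_sub_cancel_left, ← Finset.sum_sub_distrib]
  refine Finset.sum_congr rfl fun i _ => ?_
  simp_rw [mul_sub]
  exact (intervalIntegral.integral_sub (hlam.intervalIntegrable_mul (hg i) (hK.integrableOn i))
    (hlam.intervalIntegrable_mul (hg i) (hK'.integrableOn i))).symm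

end Flam

theorem Flam_continuous_general (d : ℕ) (T : ℝ)
    (b σ : Fin d → ℝ → ℝ) (C : ℝ)
    (hlip : ∀ i : Fin d, ∀ x y : ℝ,
      |b i x - b i y| + |σ i x - σ i y| ≤ C * |x - y|)
    (φ φd : ℝ → ℝ)
    (hφ : φ 0 = 0 ∧ Measurable φd ∧
      IntegrableOn (fun s => (φd s) ^ 2) (Set.Icc (0:ℝ) T) ∧
      ∀ t ∈ Set.Icc (0:ℝ) T, φ t = ∫ s in (0:ℝ)..t, φd s)
    (lam : ℝ → ℝ) (hlam : IsStepFun T lam) :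
    ∀ ν : C(Set.Icc (0:ℝ) T, Fin d → ℝ), ∀ K : ℝ → Fin d → ℝ, IsMKernel d T K →
      (∀ t : Set.Icc (0:ℝ) T, ∀ i : Fin d, ν t i = ∫ s in (0:ℝ)..(t:ℝ), K s i) →
      ∀ ε : ℝ, 0 < ε → ∃ δ : ℝ, 0 < δ ∧
        ∀ μ : C(Set.Icc (0:ℝ) T, Fin d → ℝ), ∀ K' : ℝ → Fin d → ℝ, IsMKernel d T K' →
          (∀ t : Set.Icc (0:ℝ) T, ∀ i : Fin d, μ t i = ∫ s in (0:ℝ)..(t:ℝ), K' s i) →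
          dist μ ν < δ →
          |Flam d T b σ φ φd lam K' - Flam d T b σ φ φd lam K| < ε := by
  intro ν K hK hν ε hε
  obtain ⟨-, hφd, hφd2, hφint⟩ := hφ
  have hφc : ContinuousOn φ (Icc 0 T) := continuousOn_of_eq_integral
    (((memLp_two_iff_integrable_sq hφd.aestronglyMeasurable).2 hφd2).integrable one_le_two) hφint
  have hbφ : ∀ i, ContinuousOn (fun s => b i (φ s)) (Icc 0 T) := fun i =>
    (LipschitzWith.of_dist_le' fun x y =>
      (le_add_of_nonneg_right (abs_nonneg _)).trans (hlip i x y)).continuous.comp_continuousOn hφc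
  have hσφ : ∀ i, ContinuousOn (fun s => σ i (φ s)) (Icc 0 T) := fun i =>
    (LipschitzWith.of_dist_le' fun x y =>
      (le_add_of_nonneg_left (abs_nonneg _)).trans (hlip i x y)).continuous.comp_continuousOn hφc
  have hε' : 0 < ε / (d + 1) := by positivity
  have hsmall := eventually_all.2 fun i => hlam.eventually_abs_integral_mul_le
    (F := fun r s => r * b i (φ s) + r ^ 2 / 2 * σ i (φ s) ^ 2)
    (fun r => (continuousOn_const.mul (hbφ i)).add (continuousOn_const.mul ((hσφ i).pow 2)))
    (B := 1) hε'
  obtain ⟨δ, hδ, hδpos⟩ := (hsmall.and self_mem_nhdsWithin).exists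
  refine ⟨δ, hδpos, fun μ K' hK' hμ hdist => ?_⟩
  rw [Flam_sub_Flam hlam hbφ hσφ hK hK']
  calc _ ≤ ∑ i : Fin d, |∫ s in (0:ℝ)..T,
          (lam s * b i (φ s) + lam s ^ 2 / 2 * σ i (φ s) ^ 2) * (K s i - K' s i)| :=
        Finset.abs_sum_le_sum_abs _ _
    _ ≤ ∑ _i : Fin d, ε / (d + 1) := Finset.sum_le_sum fun i _ =>
        hδ i (fun s => K s i - K' s i) ((hK.integrableOn i).sub (hK'.integrableOn i))
          (fun x hx => hK.abs_sub_le_one hK' hx i)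
          fun x hx => (hK.abs_integral_sub_le_dist hK' hν hμ hx i).trans hdist.le
    _ < ε := by
        rw [Finset.sum_const, Finset.card_univ, Fintype.card_fin, nsmul_eq_mul,
          mul_div_assoc', div_lt_iff₀ (by positivity)]
        linarith

/-- For Lipschitz `b, σ`, `φ ∈ ℍ_T` (with derivative `φd`) and a step function `λ`,
the map `ν ↦ F_λ(ν)` is continuous on `(𝕄_T, d_T)`, where `d_T` is the supremum
distance on `C([0,T], ℝ^d)`. -/
theorem Flam_continuous (d : ℕ) (hd : 1 ≤ d) (T : ℝ) (hT : 0 < T)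
    (b σ : Fin d → ℝ → ℝ) (C : ℝ) (hC : 0 < C)
    (hlip : ∀ i : Fin d, ∀ x y : ℝ,
      |b i x - b i y| + |σ i x - σ i y| ≤ C * |x - y|)
    (φ φd : ℝ → ℝ)
    (hφ : φ 0 = 0 ∧ Measurable φd ∧
      IntegrableOn (fun s => (φd s) ^ 2) (Set.Icc (0:ℝ) T) ∧
      ∀ t ∈ Set.Icc (0:ℝ) T, φ t = ∫ s in (0:ℝ)..t, φd s)
    (lam : ℝ → ℝ) (hlam : IsStepFun T lam) :
    ∀ ν : C(Set.Icc (0:ℝ) T, Fin d → ℝ), ∀ K : ℝ → Fin d → ℝ, IsMKernel d T K →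
      (∀ t : Set.Icc (0:ℝ) T, ∀ i : Fin d, ν t i = ∫ s in (0:ℝ)..(t:ℝ), K s i) →
      ∀ ε : ℝ, 0 < ε → ∃ δ : ℝ, 0 < δ ∧
        ∀ μ : C(Set.Icc (0:ℝ) T, Fin d → ℝ), ∀ K' : ℝ → Fin d → ℝ, IsMKernel d T K' →
          (∀ t : Set.Icc (0:ℝ) T, ∀ i : Fin d, μ t i = ∫ s in (0:ℝ)..(t:ℝ), K' s i) →
          dist μ ν < δ →
          |Flam d T b σ φ φd lam K' - Flam d T b σ φ φd lam K| < ε :=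
  Flam_continuous_general d T b σ C hlip φ φd hφ lam hlam
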